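/- For every integer n ≥ m and every t ≥ 0, ∑_{k=1}^{m} f(k) ∫_{0}^{t} λ n e^{−λ n s} ( k + K(t−s, n−k) ) ds = C(t,n); that is, the expectation E[(B + K(t−T*, n−B)) 1(T* ≤ t)], where T* is exponentially distributed with rate λn and B is an independent random variable with mass function f, equals the closed form C(t,n) = n − ∑_{i=1}^{n−1} \tilde γ_{n,i} e^{−λ(∑_{j=1}^{i} F(j)) t} − \tilde γ_{n,n} e^{−λ n t}. -/

import Mathlib

/-!
Conditioning on `B = k`, the integrand is `λn e^{-λns} (n - R(t-s, n-k))`, and `R(·, n-k)` is a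
finite sum of exponentials with rates `λ ∑_{j ≤ i} F(j) < λn` (also when `F(n-k) = 0`), so each
term integrates explicitly against the `Exp(λn)` density. Averaging over `B` and exchanging the
sums over `k` and `i`, the coefficient of `e^{-λ (∑_{j ≤ i} F(j)) t} - e^{-λnt}` becomes
`∑_k f(k) γ_{n-k,i} · n / (n - ∑_{j ≤ i} F(j)) = γ̃_{n,i}`, and the definition of `γ̃_{n,n}`
collects the remaining multiples of `e^{-λnt}`.
-/

open Finset MeasureTheory intervalIntegral Real Filter

noncomputable section

/-- The CDF `F(k) = ∑_{j=1}^k f(j)` of the bundle-size pmf `f`. -/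
def cdfF (f : ℕ → ℝ) (k : ℕ) : ℝ := ∑ j ∈ Finset.Icc 1 k, f j

/-- `R(t,n)`: the expected number of remaining packages at time `t` starting from `n`
packages on a line, given via its closed-form solution in terms of the constants `γ`. -/
def Rfun (f : ℕ → ℝ) (γ : ℕ → ℕ → ℝ) (lam t : ℝ) (n : ℕ) : ℝ :=
  if 0 < cdfF f n then
    ∑ i ∈ Finset.Icc 1 n, γ n i * Real.exp (-(lam * ∑ j ∈ Finset.Icc 1 i, cdfF f j) * t)
  else (n : ℝ)

/-- `K(t,n) = n - R(t,n)`. -/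
def Kfun (f : ℕ → ℝ) (γ : ℕ → ℕ → ℝ) (lam t : ℝ) (n : ℕ) : ℝ :=
  (n : ℝ) - Rfun f γ lam t n

/-- `C(t,n)`: the expected number of packages picked up by time `t` starting from `n`
packages on a circle, in closed form via the constants `γ̃`. -/
def Cfun (f : ℕ → ℝ) (tγ : ℕ → ℕ → ℝ) (lam t : ℝ) (n : ℕ) : ℝ :=
  (n : ℝ)
    - (∑ i ∈ Finset.Icc 1 (n - 1),
        tγ n i * Real.exp (-(lam * ∑ j ∈ Finset.Icc 1 i, cdfF f j) * t))
    - tγ n n * Real.exp (-(lam * (n : ℝ)) * t)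

local notation "ΣF" f:max i:max => ∑ j ∈ Finset.Icc 1 i, cdfF f j

section Cdf

variable {f : ℕ → ℝ}

lemma cdfF_nonneg (hf : ∀ k, 0 ≤ f k) (k : ℕ) : 0 ≤ cdfF f k :=
  sum_nonneg fun j _ => hf j

lemma cdfF_mono (hf : ∀ k, 0 ≤ f k) : Monotone (cdfF f) := fun _ _ h =>
  sum_le_sum_of_subset_of_nonneg (Icc_subset_Icc_right h) fun j _ _ => hf j

lemma cdfF_eq_of_le {m j : ℕ} (hf : ∀ k, m < k → f k = 0) (hj : m ≤ j) :
    cdfF f j = cdfF f m :=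
  (sum_subset (Icc_subset_Icc_right hj) fun k hk hk' =>
    hf k (by simp only [mem_Icc] at hk hk'; omega)).symm

lemma cdfF_le_one {m : ℕ} (hf : ∀ k, 0 ≤ f k) (hf_sum : cdfF f m = 1)
    (hf_supp : ∀ k, m < k → f k = 0) (j : ℕ) : cdfF f j ≤ 1 :=
  calc cdfF f j ≤ cdfF f (max j m) := cdfF_mono hf (le_max_left j m)
    _ = 1 := by rw [cdfF_eq_of_le hf_supp (le_max_right j m), hf_sum]

lemma sum_cdfF_lt (hF : ∀ j, cdfF f j ≤ 1) {i n : ℕ} (hi : i < n) : ΣF f i < n :=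
  calc ΣF f i ≤ ∑ _j ∈ Icc 1 i, (1 : ℝ) := sum_le_sum fun j _ => hF j
    _ = i := by simp
    _ < n := by exact_mod_cast hi

lemma sum_cdfF_eq_zero (hf : ∀ k, 0 ≤ f k) {i N : ℕ} (hN : cdfF f N = 0) (hi : i ≤ N) :
    ΣF f i = 0 :=
  sum_eq_zero fun j hj => le_antisymm
    (hN ▸ cdfF_mono hf (le_trans (mem_Icc.mp hj).2 hi)) (cdfF_nonneg hf j)

/-- If `F(N) = 0`, every rate `λ ∑_{j ≤ i} F(j)` with `i ≤ N` vanishes and every `γ_{N,i}`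
is `1`, so the `else` branch `R = N` agrees with the exponential sum. -/
lemma Rfun_eq_sum (hf : ∀ k, 0 ≤ f k) {γ : ℕ → ℕ → ℝ}
    (hγ_zero : ∀ n j : ℕ, cdfF f n = 0 → 1 ≤ j → j ≤ n → γ n j = 1) (lam τ : ℝ) (N : ℕ) :
    Rfun f γ lam τ N = ∑ i ∈ Icc 1 N, γ N i * exp (-(lam * ΣF f i) * τ) := by
  rw [Rfun, ite_eq_left_iff, not_lt]
  intro hN
  replace hN : cdfF f N = 0 := le_antisymm hN (cdfF_nonneg hf N)
  have hterm : ∀ i ∈ Icc 1 N, γ N i * exp (-(lam * ΣF f i) * τ) = 1 := fun i hi => by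
    obtain ⟨hi1, hiN⟩ := mem_Icc.mp hi
    rw [hγ_zero N i hN hi1 hiN, sum_cdfF_eq_zero hf hN hiN]
    simp
  rw [sum_congr rfl hterm]
  simp

end Cdf

lemma integral_exp_mul (c t : ℝ) (hc : c ≠ 0) :
    ∫ s in (0:ℝ)..t, exp (c * s) = (exp (c * t) - 1) / c := by
  rw [integral_comp_mul_left (fun u => exp u) hc]
  simp only [mul_zero, smul_eq_mul, integral_exp, exp_zero]
  field_simp

lemma integral_mul_exp_neg_mul_mul_exp {a b : ℝ} (hab : a ≠ b) (t : ℝ) :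
    ∫ s in (0:ℝ)..t, b * exp (-b * s) * exp (-a * (t - s))
      = b / (b - a) * (exp (-a * t) - exp (-b * t)) := by
  have hexp : ∀ s, b * exp (-b * s) * exp (-a * (t - s)) = b * exp (-a * t) * exp ((a - b) * s) :=
    fun s => by rw [mul_assoc, mul_assoc, ← exp_add, ← exp_add]; ring_nf
  have hsplit : exp (-b * t) = exp (-a * t) * exp ((a - b) * t) := by rw [← exp_add]; ring_nf
  simp only [hexp]
  rw [intervalIntegral.integral_const_mul, integral_exp_mul _ t (sub_ne_zero.mpr hab), hsplit]
  field_simp [sub_ne_zero.mpr hab, sub_ne_zero.mpr hab.symm]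
  ring

lemma integral_exp_density_mul_sub_sum {ι : Type*} (s : Finset ι) (c a : ι → ℝ) {b : ℝ}
    (hb : b ≠ 0) (ha : ∀ i ∈ s, a i ≠ b) (x t : ℝ) :
    ∫ u in (0:ℝ)..t, b * exp (-b * u) * (x - ∑ i ∈ s, c i * exp (-a i * (t - u)))
      = x * (1 - exp (-b * t))
        - ∑ i ∈ s, c i * (b / (b - a i) * (exp (-a i * t) - exp (-b * t))) := by
  have hdensity := integral_mul_exp_neg_mul_mul_exp hb.symm t
  simp only [neg_zero, zero_mul, exp_zero, mul_one, sub_zero, div_self hb, one_mul] at hdensity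
  have hpoint : ∀ u, b * exp (-b * u) * (x - ∑ i ∈ s, c i * exp (-a i * (t - u)))
      = x * (b * exp (-b * u)) - ∑ i ∈ s, c i * (b * exp (-b * u) * exp (-a i * (t - u))) :=
    fun u => by
      rw [mul_sub, mul_sum, mul_comm _ x]
      exact congrArg _ (sum_congr rfl fun i _ => by ring)
  have hint : ∀ i ∈ s, IntervalIntegrable
      (fun u => c i * (b * exp (-b * u) * exp (-a i * (t - u)))) volume 0 t :=
    fun i _ => by apply Continuous.intervalIntegrable; fun_prop
  simp only [hpoint]
  rw [intervalIntegral.integral_sub (by apply Continuous.intervalIntegrable; fun_prop)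
      ((continuous_finsetSum s fun i _ => by fun_prop).intervalIntegrable 0 t),
    intervalIntegral.integral_const_mul, hdensity,
    intervalIntegral.integral_finsetSum hint]
  refine congrArg _ (sum_congr rfl fun i hi => ?_)
  rw [intervalIntegral.integral_const_mul, integral_mul_exp_neg_mul_mul_exp (ha i hi)]

lemma integral_density_mul_add_Kfun {f : ℕ → ℝ} (hf : ∀ k, 0 ≤ f k) (hF : ∀ j, cdfF f j ≤ 1)
    {γ : ℕ → ℕ → ℝ} (hγ_zero : ∀ n j : ℕ, cdfF f n = 0 → 1 ≤ j → j ≤ n → γ n j = 1)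
    {lam : ℝ} (hlam : lam ≠ 0) {n k : ℕ} (hk : 1 ≤ k) (hkn : k ≤ n) (t : ℝ) :
    ∫ s in (0:ℝ)..t,
        lam * (n : ℝ) * exp (-(lam * (n : ℝ)) * s) * ((k : ℝ) + Kfun f γ lam (t - s) (n - k))
      = n * (1 - exp (-(lam * n) * t))
        - ∑ i ∈ Icc 1 (n - k), γ (n - k) i * (lam * n / (lam * n - lam * ΣF f i)
            * (exp (-(lam * ΣF f i) * t) - exp (-(lam * n) * t))) := by
  have hK : ∀ s, (k : ℝ) + Kfun f γ lam (t - s) (n - k)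
      = n - ∑ i ∈ Icc 1 (n - k), γ (n - k) i * exp (-(lam * ΣF f i) * (t - s)) := fun s => by
    rw [Kfun, Rfun_eq_sum hf hγ_zero, Nat.cast_sub hkn]
    ring
  simp only [hK]
  refine integral_exp_density_mul_sub_sum _ _ _
    (mul_ne_zero hlam (Nat.cast_ne_zero.mpr (by omega))) (fun i hi => ?_) _ _
  have hin : i < n := by have := (mem_Icc.mp hi).2; omega
  exact (mul_right_injective₀ hlam).ne (sum_cdfF_lt hF hin).ne

lemma sum_mul_sub_sum_Icc {f : ℕ → ℝ} {n : ℕ} (hf : ∑ k ∈ Icc 1 n, f k = 1) (x : ℝ)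
    (T : ℕ → ℕ → ℝ) :
    ∑ k ∈ Icc 1 n, f k * (x - ∑ i ∈ Icc 1 (n - k), T k i)
      = x - ∑ i ∈ Icc 1 (n - 1), ∑ k ∈ Icc 1 (n - i), f k * T k i := by
  simp only [mul_sub, mul_sum]
  rw [sum_sub_distrib, ← sum_mul, hf, one_mul]
  exact congrArg _ (sum_comm' fun k i => by simp only [mem_Icc]; omega)

lemma sum_mul_gamma_mul_eq {f : ℕ → ℝ} (hF : ∀ j, cdfF f j ≤ 1) {γ tγ : ℕ → ℕ → ℝ}
    {lam : ℝ} (hlam : lam ≠ 0) {n i : ℕ} (hin : i < n)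
    (htγ : tγ n i = (∑ k ∈ Icc 1 (n - i), f k * γ (n - k) i) /
        (1 - (1 / (n : ℝ)) * ΣF f i)) (D : ℝ) :
    ∑ k ∈ Icc 1 (n - i), f k * (γ (n - k) i * (lam * n / (lam * n - lam * ΣF f i) * D))
      = tγ n i * D := by
  have hn : (n : ℝ) ≠ 0 := Nat.cast_ne_zero.mpr (by omega)
  have hS : (n : ℝ) - ΣF f i ≠ 0 := sub_ne_zero.mpr (sum_cdfF_lt hF hin).ne'
  simp only [← mul_assoc, ← sum_mul, htγ]
  field_simp

lemma Cfun_eq {f : ℕ → ℝ} {tγ : ℕ → ℕ → ℝ} {n : ℕ}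
    (htγ_diag : tγ n n = (n : ℝ) - ∑ i ∈ Icc 1 (n - 1), tγ n i) (lam t : ℝ) :
    Cfun f tγ lam t n = n * (1 - exp (-(lam * n) * t))
      - ∑ i ∈ Icc 1 (n - 1), tγ n i * (exp (-(lam * ΣF f i) * t) - exp (-(lam * n) * t)) := by
  rw [Cfun, htγ_diag]
  simp only [mul_sub, sum_sub_distrib, ← sum_mul]
  ring

theorem stmt_3_general
    (m : ℕ) (f : ℕ → ℝ)
    (hf_nonneg : ∀ k, 0 ≤ f k)
    (hf_sum : ∑ k ∈ Finset.Icc 1 m, f k = 1)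
    (hf_supp : ∀ k : ℕ, k = 0 ∨ m < k → f k = 0)
    (lam : ℝ) (hlam : 0 < lam)
    (γ : ℕ → ℕ → ℝ)
    (hγ_zero : ∀ n j : ℕ, cdfF f n = 0 → 1 ≤ j → j ≤ n → γ n j = 1)
    (tγ : ℕ → ℕ → ℝ)
    (htγ_rec : ∀ n i : ℕ, m ≤ n → 1 ≤ i → i ≤ n - 1 →
      tγ n i = (∑ k ∈ Finset.Icc 1 (n - i), f k * γ (n - k) i) /
        (1 - (1 / (n : ℝ)) * ∑ j ∈ Finset.Icc 1 i, cdfF f j))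
    (htγ_diag : ∀ n : ℕ, m ≤ n →
      tγ n n = (n : ℝ) - ∑ i ∈ Finset.Icc 1 (n - 1), tγ n i)
    (n : ℕ) (hn : m ≤ n) (t : ℝ) :
    ∑ k ∈ Finset.Icc 1 m,
        f k * ∫ s in (0:ℝ)..t,
          lam * (n : ℝ) * Real.exp (-(lam * (n : ℝ)) * s) * ((k : ℝ) + Kfun f γ lam (t - s) (n - k))
      = Cfun f tγ lam t n := by
  have hf_supp' : ∀ k, m < k → f k = 0 := fun k hk => hf_supp k (Or.inr hk)
  have hF : ∀ j, cdfF f j ≤ 1 := cdfF_le_one hf_nonneg hf_sum hf_supp'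
  have hf_sum_n : ∑ k ∈ Icc 1 n, f k = 1 := (cdfF_eq_of_le hf_supp' hn).trans hf_sum
  rw [sum_subset (Icc_subset_Icc_right hn) fun k hk hk' => by
      rw [hf_supp' k (by simp only [mem_Icc] at hk hk'; omega), zero_mul],
    sum_congr rfl fun k hk => by
      rw [integral_density_mul_add_Kfun hf_nonneg hF hγ_zero hlam.ne' (mem_Icc.mp hk).1
        (mem_Icc.mp hk).2],
    sum_mul_sub_sum_Icc hf_sum_n, Cfun_eq (htγ_diag n hn)]
  refine congrArg _ (sum_congr rfl fun i hi => ?_)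
  obtain ⟨hi1, hin⟩ := mem_Icc.mp hi
  exact sum_mul_gamma_mul_eq hF hlam.ne' (by omega) (htγ_rec n i hn hi1 hin) _

/-- For every `n ≥ m` and `t ≥ 0`,
`∑_{k=1}^m f(k) ∫_0^t λ n e^{-λ n s} (k + K(t-s, n-k)) ds = C(t,n)`, i.e. the expectation
`E[(B + K(t-T*, n-B)) 1(T* ≤ t)]` with `T* ~ Exp(λn)`, `B ~ f`, equals the closed form. -/
theorem stmt_3
    (m : ℕ) (hm : 1 ≤ m) (f : ℕ → ℝ)
    (hf_nonneg : ∀ k, 0 ≤ f k)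
    (hf_sum : ∑ k ∈ Finset.Icc 1 m, f k = 1)
    (hf_supp : ∀ k : ℕ, k = 0 ∨ m < k → f k = 0)
    (lam : ℝ) (hlam : 0 < lam)
    (γ : ℕ → ℕ → ℝ)
    (hγ_zero : ∀ n j : ℕ, cdfF f n = 0 → 1 ≤ j → j ≤ n → γ n j = 1)
    (hγ_rec : ∀ n i : ℕ, 0 < cdfF f n → 1 ≤ i → i < n →
      γ n i = 2 * (∑ j ∈ Finset.Icc 1 (n - i), cdfF f j * γ (n - j) i) /
        (∑ k ∈ Finset.Icc (i + 1) n, cdfF f k))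
    (hγ_diag : ∀ n : ℕ, 0 < cdfF f n →
      γ n n = (n : ℝ) - ∑ i ∈ Finset.Icc 1 (n - 1), γ n i)
    (tγ : ℕ → ℕ → ℝ)
    (htγ_rec : ∀ n i : ℕ, m ≤ n → 1 ≤ i → i ≤ n - 1 →
      tγ n i = (∑ k ∈ Finset.Icc 1 (n - i), f k * γ (n - k) i) /
        (1 - (1 / (n : ℝ)) * ∑ j ∈ Finset.Icc 1 i, cdfF f j))
    (htγ_diag : ∀ n : ℕ, m ≤ n →
      tγ n n = (n : ℝ) - ∑ i ∈ Finset.Icc 1 (n - 1), tγ n i)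
    (n : ℕ) (hn : m ≤ n) (t : ℝ) (ht : 0 ≤ t) :
    ∑ k ∈ Finset.Icc 1 m,
        f k * ∫ s in (0:ℝ)..t,
          lam * (n : ℝ) * Real.exp (-(lam * (n : ℝ)) * s) * ((k : ℝ) + Kfun f γ lam (t - s) (n - k))
      = Cfun f tγ lam t n :=
  stmt_3_general m f hf_nonneg hf_sum hf_supp lam hlam γ hγ_zero tγ htγ_rec htγ_diag n hn t
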